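/- Let N ≥ 2 be an integer, z : ℤ/Nℤ → ℂ a function with z(−a) = −z(a) for all a, and let 1 ≤ m,k ≤ N⁻ be row and column indices; put d = gcd(k,N) and N_d = N/d. If d does not divide m, then the (m,k)-entry of the matrix S_N·Z_N is 0. If m = du and k = dv (so that gcd(v, N_d) = 1), then the (m,k)-entry of S_N·Z_N equals d·ẑ_d(t), where t ∈ ℤ/N_dℤ is the unique residue with v·t ≡ u (mod N_d). -/

import Mathlib

/-!
Both `n ↦ sin (2πmn/N)` and `n ↦ z (kn)` are odd modulo `N`, so twice the `(m, k)` entry is the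
full sum `Σ_{n mod N} sin (2πmn/N) z (kn)`. Writing `n = i + N_d j` with `i < N_d`, `j < d`, the
factor `z (kn)` depends only on `i` because `d ∣ k`, and the inner sum `Σ_j sin (2πmi/N + 2πmj/d)`
is the imaginary part of a geometric sum of `d`-th roots of unity: it vanishes unless `d ∣ m`, and
equals `d sin (2πui/N_d)` when `m = du`. Then the substitution `i ↦ v⁻¹ i` in `ℤ/N_dℤ` turns
`sin (2πui/N_d) z (dvi)` into `sin (2πti/N_d) z (di)`.
-/

/-- The discrete sine matrix `S_N`, of size `N⁻ × N⁻` with `N⁻ = ⌊(N−1)/2⌋`: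
its `(m,n)` entry (for `1 ≤ m,n ≤ N⁻`) is `sin(2πmn/N)`. -/
noncomputable def sinMatrix (N : ℕ) : Matrix (Fin ((N - 1) / 2)) (Fin ((N - 1) / 2)) ℝ :=
  Matrix.of fun m n => Real.sin (2 * Real.pi * ((m : ℕ) + 1) * ((n : ℕ) + 1) / N)

/-- The matrix `Z_N` attached to an odd function `z : ℤ/Nℤ → ℂ`:
its `(i,j)` entry (for `1 ≤ i,j ≤ N⁻`) is `z(ij mod N)`. -/
def ZMat (N : ℕ) (z : ZMod N → ℂ) : Matrix (Fin ((N - 1) / 2)) (Fin ((N - 1) / 2)) ℂ :=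
  Matrix.of fun i j => z ((((i : ℕ) + 1) : ZMod N) * (((j : ℕ) + 1) : ZMod N))

/-- For a divisor `d` of `N` and `t ∈ ℤ/N_dℤ` (`N_d = N/d`),
`ẑ_d(t) = (1/2)·Σ_{r=1}^{N_d} z(dr mod N)·sin(2πtr/N_d)`. -/
noncomputable def zhat (N d : ℕ) (z : ZMod N → ℂ) (t : ZMod (N / d)) : ℂ :=
  (1 / 2 : ℂ) * ∑ r ∈ Finset.Icc 1 (N / d),
    z (((d * r : ℕ) : ZMod N)) *
      (Real.sin (2 * Real.pi * (ZMod.val t) * r / ((N / d : ℕ) : ℝ)) : ℝ)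

open Finset Real

theorem Finset.sum_range_mul_eq_sum_sum {α} [AddCommMonoid α] (f : ℕ → α) (p d : ℕ) :
    ∑ n ∈ range (p * d), f n = ∑ i ∈ range p, ∑ j ∈ range d, f (i + p * j) := by
  induction d with
  | zero => simp
  | succ d ih =>
    rw [Nat.mul_succ, sum_range_add, ih, ← sum_add_distrib]
    exact sum_congr rfl fun i _ => by rw [sum_range_succ, add_comm (p * d)]

theorem Finset.sum_range_eq_two_nsmul_sum_range_half {α} [AddCommMonoid α] {N : ℕ} (f : ℕ → α)
    (h0 : f 0 = 0) (hrefl : ∀ n ≤ N, f (N - n) = f n) (hmid : ∀ n, 2 * n = N → f n = 0) :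
    ∑ n ∈ range N, f n = 2 • ∑ x ∈ range ((N - 1) / 2), f (x + 1) := by
  rcases Nat.eq_zero_or_pos N with rfl | hN
  · simp
  obtain ⟨M, hM⟩ : ∃ M, (N - 1) / 2 = M := ⟨_, rfl⟩
  obtain ⟨K, hK⟩ : ∃ K, N - (M + 1) = K := ⟨_, rfl⟩
  have hsplit : ∑ n ∈ range N, f n =
      ∑ n ∈ range (M + 1), f n + ∑ n ∈ range K, f (M + 1 + n) := by
    rw [← sum_range_add, show M + 1 + K = N by omega]
  have hreflect : ∑ n ∈ range K, f (M + 1 + n) = ∑ n ∈ range K, f (n + 1) := by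
    rw [← sum_range_reflect]
    refine sum_congr rfl fun n hn => ?_
    rw [mem_range] at hn
    rw [← hrefl (n + 1) (by omega)]
    congr 1
    omega
  rw [hM, hsplit, hreflect, sum_range_succ', h0, add_zero, two_nsmul]
  rcases (by omega : K = M ∨ K = M + 1) with hKM | hKM
  · rw [hKM]
  · rw [hKM, sum_range_succ, hmid (M + 1) (by omega), add_zero]

theorem ZMod.sum_eq_sum_range {α} [AddCommMonoid α] {p : ℕ} [NeZero p] (g : ZMod p → α) :
    ∑ b, g b = ∑ n ∈ range p, g n := by
  obtain ⟨q, rfl⟩ := Nat.exists_eq_succ_of_ne_zero (NeZero.ne p)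
  rw [Finset.sum_range]
  exact Fintype.sum_congr _ _ fun i => congrArg g (Fin.cast_val_eq_self i).symm

theorem Function.Periodic.sum_range_mul_left {α} [AddCommMonoid α] {f : ℕ → α} {p : ℕ}
    (hf : Function.Periodic f p) {v : ℕ} (hv : v.Coprime p) :
    ∑ n ∈ range p, f (v * n) = ∑ n ∈ range p, f n := by
  rcases Nat.eq_zero_or_pos p with rfl | hp
  · simp
  have : NeZero p := ⟨hp.ne'⟩
  have hval : ∀ n : ℕ, f n = f (n : ZMod p).val := fun n => by
    rw [ZMod.val_natCast, hf.map_mod_nat]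
  let g : ZMod p → α := fun b => f b.val
  let w := ZMod.unitOfCoprime v hv
  calc ∑ n ∈ range p, f (v * n) = ∑ n ∈ range p, g (w * n) := by
        refine sum_congr rfl fun n _ => ?_
        simp [g, w, hval (v * n)]
    _ = ∑ b, g b := by
        rw [← ZMod.sum_eq_sum_range (fun b => g ((w : ZMod p) * b))]
        exact Fintype.sum_bijective _ (Units.mulLeft_bijective w) _ _ fun _ => rfl
    _ = ∑ n ∈ range p, f n := by
        rw [ZMod.sum_eq_sum_range]
        exact sum_congr rfl fun n _ => (hval n).symm

theorem Function.Periodic.sum_Icc_one_eq_sum_range {α} [AddCommMonoid α] {f : ℕ → α} {p : ℕ}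
    (hf : Function.Periodic f p) : ∑ n ∈ Icc 1 p, f n = ∑ n ∈ range p, f n := by
  rcases Nat.eq_zero_or_pos p with rfl | hp
  · simp
  obtain ⟨q, rfl⟩ := Nat.exists_eq_add_one_of_ne_zero hp.ne'
  rw [sum_Icc_succ_top (by omega), range_eq_Ico, sum_eq_sum_Ico_succ_bot hp, add_comm, hf.eq,
    zero_add, Ico_add_one_right_eq_Icc]

theorem Real.sin_two_pi_mul_div_eq_of_intCast_eq {N : ℕ} {x y : ℤ} (h : (x : ZMod N) = y) :
    sin (2 * π * x / N) = sin (2 * π * y / N) := by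
  obtain ⟨q, hq⟩ := (ZMod.intCast_eq_intCast_iff_dvd_sub x y N).mp h
  rcases eq_or_ne N 0 with rfl | hN
  · simp
  have hy : (y : ℝ) = x + N * q := by exact_mod_cast (sub_eq_iff_eq_add'.mp hq)
  rw [hy, show 2 * π * (x + N * q) / N = 2 * π * x / N + q * (2 * π) by field_simp,
    sin_add_int_mul_two_pi]

theorem Real.sum_range_sin_add_two_pi_mul_div_eq_zero {d a : ℕ} (ha : ¬ d ∣ a) (x : ℝ) :
    ∑ j ∈ range d, sin (x + 2 * π * a * j / d) = 0 := by
  rcases eq_or_ne d 0 with rfl | hd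
  · simp
  have hζ := Complex.isPrimitiveRoot_exp d hd
  set ξ := Complex.exp (2 * π * Complex.I / d) ^ a
  have hξ : ξ ≠ 1 := fun h => ha ((hζ.pow_eq_one_iff_dvd a).mp h)
  have hξd : ξ ^ d = 1 := by rw [← pow_mul, mul_comm a d, pow_mul, hζ.pow_eq_one, one_pow]
  have hterm : ∀ j : ℕ, sin (x + 2 * π * a * j / d) =
      (Complex.exp (x * Complex.I) * ξ ^ j).im := by
    intro j
    rw [← pow_mul, ← Complex.exp_nat_mul, ← Complex.exp_add, ← Complex.exp_ofReal_mul_I_im]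
    congr 2
    push_cast
    ring
  simp only [hterm, ← Complex.im_sum, ← mul_sum, geom_sum_eq hξ, hξd, sub_self, zero_div,
    mul_zero, Complex.zero_im]

theorem Real.sum_range_sin_add_two_pi_mul_div_of_dvd {d a : ℕ} (ha : d ∣ a) (x : ℝ) :
    ∑ j ∈ range d, sin (x + 2 * π * a * j / d) = d * sin x := by
  rcases eq_or_ne d 0 with rfl | hd
  · simp
  obtain ⟨u, rfl⟩ := ha
  have hterm : ∀ j : ℕ, sin (x + 2 * π * (d * u : ℕ) * j / d) = sin x := fun j => by
    rw [show x + 2 * π * (d * u : ℕ) * j / d = x + (u * j : ℤ) * (2 * π) by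
      push_cast; field_simp, sin_add_int_mul_two_pi]
  rw [sum_congr rfl fun j _ => hterm j, sum_const, card_range, nsmul_eq_mul]

section

variable {N : ℕ} (z : ZMod N → ℂ)

theorem sum_range_sin_mul_eq_two_mul_sum (hz : ∀ a, z (-a) = -z a) (a c : ℕ) :
    ∑ n ∈ range N, (sin (2 * π * a * n / N) : ℂ) * z (n * c : ℕ) =
      2 * ∑ x ∈ range ((N - 1) / 2),
        (sin (2 * π * a * (x + 1 : ℕ) / N) : ℂ) * z ((x + 1) * c : ℕ) := by
  rw [sum_range_eq_two_nsmul_sum_range_half _ (by simp), nsmul_eq_mul, Nat.cast_ofNat]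
  · intro n hn
    have hsin : sin (2 * π * a * (N - n : ℕ) / N) = -sin (2 * π * a * n / N) := by
      have h := sin_two_pi_mul_div_eq_of_intCast_eq (N := N) (x := a * (N - n : ℕ))
        (y := -(a * n)) (by push_cast [Nat.cast_sub hn]; simp)
      push_cast at h
      rw [← sin_neg]
      convert h using 2 <;> ring
    have hz' : z ((N - n) * c : ℕ) = -z (n * c : ℕ) := by
      rw [← hz]
      push_cast [Nat.cast_sub hn]
      simp
    rw [hsin, hz']
    push_cast
    ring
  · intro n hn
    rcases Nat.eq_zero_or_pos n with rfl | hn0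
    · simp
    have : 2 * π * a * n / N = a * π := by
      rw [← hn]
      push_cast
      field_simp
    rw [this, sin_nat_mul_pi]
    simp

variable [NeZero N]

theorem sum_range_sin_mul_eq_sum_sum {d p c : ℕ} (hN : d * p = N) (hc : d ∣ c) (a : ℕ) :
    ∑ n ∈ range N, (sin (2 * π * a * n / N) : ℂ) * z (n * c : ℕ) =
      ∑ i ∈ range p, ((∑ j ∈ range d, sin (2 * π * a * i / N + 2 * π * a * j / d) : ℝ) : ℂ) *
        z (i * c : ℕ) := by
  have hp : (p : ℝ) ≠ 0 := by exact_mod_cast right_ne_zero_of_mul (hN ▸ NeZero.ne N)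
  obtain ⟨c', rfl⟩ := hc
  rw [show range N = range (p * d) by rw [← hN, mul_comm], sum_range_mul_eq_sum_sum]
  refine sum_congr rfl fun i _ => ?_
  rw [Complex.ofReal_sum, sum_mul]
  refine sum_congr rfl fun j _ => ?_
  have hz : (((i + p * j) * (d * c') : ℕ) : ZMod N) = (i * (d * c') : ℕ) := by
    rw [show (i + p * j) * (d * c') = i * (d * c') + N * (j * c') by rw [← hN]; ring]
    simp
  rw [hz]
  congr 3
  rw [← hN]
  push_cast
  field_simp

theorem sum_range_sin_mul_eq_zero {d p c a : ℕ} (hN : d * p = N) (hc : d ∣ c)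
    (ha : ¬ d ∣ a) :
    ∑ n ∈ range N, (sin (2 * π * a * n / N) : ℂ) * z (n * c : ℕ) = 0 := by
  rw [sum_range_sin_mul_eq_sum_sum z hN hc]
  simp [sum_range_sin_add_two_pi_mul_div_eq_zero ha]

theorem sum_range_sin_mul_eq_mul_sum_range {d p c : ℕ} (hN : d * p = N) (hc : d ∣ c)
    (u : ℕ) :
    ∑ n ∈ range N, (sin (2 * π * (d * u : ℕ) * n / N) : ℂ) * z (n * c : ℕ) =
      d * ∑ i ∈ range p, (sin (2 * π * u * i / p) : ℂ) * z (i * c : ℕ) := by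
  have hd : (d : ℝ) ≠ 0 := by exact_mod_cast left_ne_zero_of_mul (hN ▸ NeZero.ne N)
  rw [sum_range_sin_mul_eq_sum_sum z hN hc, mul_sum]
  refine sum_congr rfl fun i _ => ?_
  have hNdp : (N : ℝ) = d * p := by exact_mod_cast hN.symm
  rw [sum_range_sin_add_two_pi_mul_div_of_dvd (dvd_mul_right d u), hNdp, Nat.cast_mul,
    show 2 * π * (d * u) * i / (d * p) = 2 * π * u * i / p by field_simp]
  push_cast
  ring

theorem sum_range_sin_mul_eq_sum_Icc {d p u v : ℕ} (hN : d * p = N) (hv : v.Coprime p)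
    {t : ZMod p} (ht : (v : ZMod p) * t = u) :
    ∑ i ∈ range p, (sin (2 * π * u * i / p) : ℂ) * z (i * (d * v) : ℕ) =
      ∑ r ∈ Icc 1 p, z (d * r : ℕ) * (sin (2 * π * t.val * r / p) : ℂ) := by
  have : NeZero p := ⟨right_ne_zero_of_mul (hN ▸ NeZero.ne N)⟩
  have hp : (p : ℝ) ≠ 0 := by exact_mod_cast NeZero.ne p
  let f : ℕ → ℂ := fun r => z (d * r : ℕ) * (sin (2 * π * t.val * r / p) : ℂ)
  have hf : Function.Periodic f p := fun r => by
    have hz : ((d * (r + p) : ℕ) : ZMod N) = (d * r : ℕ) := by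
      rw [mul_add, hN]
      simp
    have hsin : sin (2 * π * t.val * (r + p : ℕ) / p) = sin (2 * π * t.val * r / p) := by
      push_cast
      rw [show 2 * π * t.val * (r + p) / p = 2 * π * t.val * r / p + (t.val : ℤ) * (2 * π) by
        push_cast; field_simp, sin_add_int_mul_two_pi]
    simp only [f, hz, hsin]
  rw [hf.sum_Icc_one_eq_sum_range, ← hf.sum_range_mul_left hv]
  refine sum_congr rfl fun i _ => ?_
  have hsin : sin (2 * π * u * i / p) = sin (2 * π * t.val * (v * i : ℕ) / p) := by
    have h := sin_two_pi_mul_div_eq_of_intCast_eq (N := p) (x := u * i) (y := t.val * (v * i))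
      (by push_cast; rw [ZMod.natCast_zmod_val, ← ht]; ring)
    push_cast at h ⊢
    convert h using 3 <;> ring
  simp only [f, hsin]
  rw [mul_comm, show i * (d * v) = d * (v * i) by ring]

end

theorem two_mul_sinMatrix_mul_ZMat_apply {N : ℕ} (z : ZMod N → ℂ) (hz : ∀ a, z (-a) = -z a)
    (m k : Fin ((N - 1) / 2)) :
    2 * ((sinMatrix N).map (fun r => (r : ℂ)) * ZMat N z) m k =
      ∑ n ∈ range N, (sin (2 * π * (m + 1 : ℕ) * n / N) : ℂ) * z (n * (k + 1 : ℕ) : ℕ) := by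
  rw [sum_range_sin_mul_eq_two_mul_sum z hz, Matrix.mul_apply,
    ← Fin.sum_univ_eq_sum_range (fun x => (sin (2 * π * (m + 1 : ℕ) * (x + 1 : ℕ) / N) : ℂ) *
      z ((x + 1) * (k + 1 : ℕ) : ℕ))]
  congr 1
  refine Fintype.sum_congr _ _ fun j => ?_
  simp only [sinMatrix, ZMat, Matrix.map_apply, Matrix.of_apply]
  push_cast
  ring_nf

theorem sinMatrix_mul_ZMat_apply_general (N : ℕ) (z : ZMod N → ℂ)
    (hz : ∀ a : ZMod N, z (-a) = -z a) (m k : Fin ((N - 1) / 2)) :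
    (¬ (Nat.gcd ((k : ℕ) + 1) N ∣ ((m : ℕ) + 1)) →
      ((sinMatrix N).map (fun r => (r : ℂ)) * ZMat N z) m k = 0) ∧
    (∀ u v : ℕ, (m : ℕ) + 1 = Nat.gcd ((k : ℕ) + 1) N * u →
      (k : ℕ) + 1 = Nat.gcd ((k : ℕ) + 1) N * v →
      ∀ t : ZMod (N / Nat.gcd ((k : ℕ) + 1) N),
        (v : ZMod (N / Nat.gcd ((k : ℕ) + 1) N)) * t =
          (u : ZMod (N / Nat.gcd ((k : ℕ) + 1) N)) →
        ((sinMatrix N).map (fun r => (r : ℂ)) * ZMat N z) m k =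
          (Nat.gcd ((k : ℕ) + 1) N : ℂ) * zhat N (Nat.gcd ((k : ℕ) + 1) N) z t) := by
  have : NeZero N := ⟨by have := m.isLt; omega⟩
  set d := ((k : ℕ) + 1).gcd N
  have hd : 0 < d := Nat.gcd_pos_of_pos_right _ (NeZero.pos N)
  have hdN : d * (N / d) = N := Nat.mul_div_cancel' (Nat.gcd_dvd_right _ _)
  have hentry := two_mul_sinMatrix_mul_ZMat_apply z hz m k
  refine ⟨fun hm => ?_, fun u v hu hv t ht => ?_⟩
  · have h := sum_range_sin_mul_eq_zero z hdN (Nat.gcd_dvd_left _ _) hm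
    rw [← hentry] at h
    exact (mul_eq_zero.mp h).resolve_left two_ne_zero
  · have hcop : v.Coprime (N / d) := by
      have h : (((k : ℕ) + 1) / d).Coprime (N / d) := Nat.coprime_div_gcd_div_gcd hd
      rwa [hv, Nat.mul_div_cancel_left v hd] at h
    have h := sum_range_sin_mul_eq_mul_sum_range z hdN (dvd_mul_right d v) u
    rw [sum_range_sin_mul_eq_sum_Icc z hdN hcop ht, ← hu, ← hv, ← hentry] at h
    refine mul_left_cancel₀ two_ne_zero ?_
    rw [h, zhat]
    ring

/-- Entry structure of `S_N·Z_N` for odd `z`: row/column indices `m,k ∈ {1,…,N⁻}`,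
with `d = gcd(k,N)`, the `(m,k)` entry vanishes unless `d ∣ m`, and if `m = du`,
`k = dv` then it equals `d·ẑ_d(t)` where `t` is the unique residue mod `N_d = N/d`
with `v·t ≡ u (mod N_d)`. -/
theorem sinMatrix_mul_ZMat_apply (N : ℕ) (hN : 2 ≤ N) (z : ZMod N → ℂ)
    (hz : ∀ a : ZMod N, z (-a) = -z a) (m k : Fin ((N - 1) / 2)) :
    (¬ (Nat.gcd ((k : ℕ) + 1) N ∣ ((m : ℕ) + 1)) →
      ((sinMatrix N).map (fun r => (r : ℂ)) * ZMat N z) m k = 0) ∧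
    (∀ u v : ℕ, (m : ℕ) + 1 = Nat.gcd ((k : ℕ) + 1) N * u →
      (k : ℕ) + 1 = Nat.gcd ((k : ℕ) + 1) N * v →
      ∀ t : ZMod (N / Nat.gcd ((k : ℕ) + 1) N),
        (v : ZMod (N / Nat.gcd ((k : ℕ) + 1) N)) * t =
          (u : ZMod (N / Nat.gcd ((k : ℕ) + 1) N)) →
        ((sinMatrix N).map (fun r => (r : ℂ)) * ZMat N z) m k =
          (Nat.gcd ((k : ℕ) + 1) N : ℂ) * zhat N (Nat.gcd ((k : ℕ) + 1) N) z t) :=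
  sinMatrix_mul_ZMat_apply_general N z hz m k
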